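/- arXiv:0712.1684 — 4 statements merged into one kernel-verified Lean document; each statement's English description precedes it below -/
import Mathlib

section
/- Let η ⊆ ℝ^d be a locally finite set whose convex hull is all of ℝ^d. Then for every a ∈ η, the Voronoi cell V_η(a) = {v ∈ ℝ^d : ‖v − a‖ ≤ ‖v − b‖ for all b ∈ η} is a compact convex set. -/
/-!
The condition `dist v a ≤ dist v b` is the half-space `2 ⟪v - a, b - a⟫ ≤ ‖b - a‖²`, so a
Voronoi cell is closed and convex. For boundedness, since `conv η = ℝ^d`, finitely many sites
`t ⊆ η` already have a ball `B(a, r)` in their convex hull. If `t ⊆ B(a, R)`, then for `v` in the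
cell all of `t`, hence `B(a, r)`, lies in `{y | ⟪v - a, y - a⟫ ≤ R² / 2}`; testing this at the
point `a + r (v - a) / ‖v - a‖` of the ball gives `‖v - a‖ ≤ R² / (2 r)`.
-/

open Metric Set
open scoped RealInnerProductSpace

def voronoiCell {X : Type*} [PseudoMetricSpace X] (s : Set X) (a : X) : Set X :=
  {v | ∀ b ∈ s, dist v a ≤ dist v b}

section MetricSpace

variable {X : Type*} [PseudoMetricSpace X]

theorem voronoiCell_anti {s t : Set X} (hst : s ⊆ t) (a : X) :
    voronoiCell t a ⊆ voronoiCell s a :=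
  fun _ hv b hb => hv b (hst hb)

theorem isClosed_voronoiCell (s : Set X) (a : X) : IsClosed (voronoiCell s a) := by
  simp only [voronoiCell, ofPred_forall]
  exact isClosed_biInter fun b _ =>
    isClosed_le (continuous_id.dist continuous_const) (continuous_id.dist continuous_const)

end MetricSpace

section InnerProductSpace

variable {E : Type*} [NormedAddCommGroup E] [InnerProductSpace ℝ E]

theorem dist_le_dist_iff_two_mul_inner_le {v a b : E} :
    dist v a ≤ dist v b ↔ 2 * ⟪v - a, b - a⟫ ≤ ‖b - a‖ ^ 2 := by
  have hvb : v - b = (v - a) - (b - a) := by abel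
  rw [dist_eq_norm, dist_eq_norm, ← sq_le_sq₀ (norm_nonneg _) (norm_nonneg _), hvb,
    norm_sub_sq_real (v - a)]
  constructor <;> intro h <;> linarith

theorem convex_setOf_inner_sub_le (u a : E) (c : ℝ) : Convex ℝ {y | ⟪u, y - a⟫ ≤ c} := by
  simp only [inner_sub_right, sub_le_iff_le_add]
  exact convex_halfSpace_le (innerₛₗ ℝ u).isLinear _

theorem convex_voronoiCell (s : Set E) (a : E) : Convex ℝ (voronoiCell s a) := by
  simp only [voronoiCell, ofPred_forall, dist_le_dist_iff_two_mul_inner_le]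
  refine convex_iInter₂ fun b _ => ?_
  convert convex_setOf_inner_sub_le (b - a) a (‖b - a‖ ^ 2 / 2) using 1
  ext v
  rw [mem_ofPred_eq, mem_ofPred_eq, real_inner_comm]
  constructor <;> intro h <;> linarith

theorem voronoiCell_subset_closedBall {s : Set E} {a : E} {r R : ℝ} (hr : 0 < r)
    (hsR : s ⊆ closedBall a R) (hrs : closedBall a r ⊆ convexHull ℝ s) :
    voronoiCell s a ⊆ closedBall a (R ^ 2 / (2 * r)) := by
  intro v hv
  rw [mem_closedBall, dist_eq_norm, le_div_iff₀ (by positivity)]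
  have hhalf : convexHull ℝ s ⊆ {y | ⟪v - a, y - a⟫ ≤ R ^ 2 / 2} := by
    refine convexHull_min (fun b hb => ?_) (convex_setOf_inner_sub_le _ _ _)
    have hvb := dist_le_dist_iff_two_mul_inner_le.1 (hv b hb)
    have hbR : ‖b - a‖ ≤ R := by simpa [dist_eq_norm] using hsR hb
    have hbR2 : ‖b - a‖ ^ 2 ≤ R ^ 2 := pow_le_pow_left₀ (norm_nonneg _) hbR 2
    simp only [mem_ofPred_eq]
    linarith
  rcases eq_or_ne v a with rfl | hva
  · simpa using sq_nonneg R
  have hnorm : 0 < ‖v - a‖ := norm_pos_iff.2 (sub_ne_zero.2 hva)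
  set x := a + (r / ‖v - a‖) • (v - a)
  have hx : x ∈ closedBall a r := by
    simp [x, norm_smul, abs_of_pos hr, hnorm.ne']
  have hx_half := hhalf (hrs hx)
  simp only [x, mem_ofPred_eq, add_sub_cancel_left, real_inner_smul_right,
    real_inner_self_eq_norm_sq] at hx_half
  have hscale : r / ‖v - a‖ * ‖v - a‖ ^ 2 = r * ‖v - a‖ := by field_simp
  linarith

end InnerProductSpace

section FiniteDimensional

variable {E : Type*} [NormedAddCommGroup E] [NormedSpace ℝ E]

theorem Set.Finite.exists_finite_subset_subset_convexHull {s u : Set E} (hu : u.Finite)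
    (hus : u ⊆ convexHull ℝ s) : ∃ t ⊆ s, t.Finite ∧ u ⊆ convexHull ℝ t := by
  have hfin : ∀ p : u, ∃ t : Finset E, ↑t ⊆ s ∧ p.1 ∈ convexHull ℝ (t : Set E) := fun p => by
    simpa [convexHull_eq_union_convexHull_finite_subsets s] using hus p.2
  choose t hts hpt using hfin
  have := hu.to_subtype
  refine ⟨⋃ p, t p, iUnion_subset hts, finite_iUnion fun p => (t p).finite_toSet, ?_⟩
  exact fun p hp => convexHull_mono (subset_iUnion (fun p => (t p : Set E)) ⟨p, hp⟩) (hpt ⟨p, hp⟩)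

theorem Convex.exists_finite_subset_subset_convexHull_of_isCompact [FiniteDimensional ℝ E]
    {s K : Set E} (hKconv : Convex ℝ K) (hK : IsCompact K) (hKs : K ⊆ interior (convexHull ℝ s)) :
    ∃ t ⊆ s, t.Finite ∧ K ⊆ convexHull ℝ t := by
  obtain ⟨u, hKu, hus⟩ := hKconv.exists_subset_interior_convexHull_finset_of_isCompact hK
    (isOpen_interior.mem_nhdsSet.2 hKs)
  obtain ⟨t, hts, ht, hut⟩ := u.finite_toSet.exists_finite_subset_subset_convexHull
    ((subset_convexHull ℝ _).trans (hus.trans interior_subset))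
  exact ⟨t, hts, ht, hKu.trans <| interior_subset.trans <|
    convexHull_min hut (convex_convexHull ℝ t)⟩

end FiniteDimensional

theorem stmt_3_general {d : ℕ} (η : Set (EuclideanSpace ℝ (Fin d)))
    (hconv : convexHull ℝ η = Set.univ) (a : EuclideanSpace ℝ (Fin d)) :
    IsCompact {v : EuclideanSpace ℝ (Fin d) | ∀ b ∈ η, dist v a ≤ dist v b} ∧
      Convex ℝ {v : EuclideanSpace ℝ (Fin d) | ∀ b ∈ η, dist v a ≤ dist v b} := by
  obtain ⟨t, htη, ht, hball⟩ :=
    (convex_closedBall a 1).exists_finite_subset_subset_convexHull_of_isCompact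
      (isCompact_closedBall a 1) (by rw [hconv, interior_univ]; exact subset_univ _)
  obtain ⟨R, htR⟩ := ht.isBounded.subset_closedBall a
  have hbdd : Bornology.IsBounded (voronoiCell η a) :=
    isBounded_closedBall.subset <|
      (voronoiCell_anti htη a).trans (voronoiCell_subset_closedBall one_pos htR hball)
  exact ⟨isCompact_of_isClosed_isBounded (isClosed_voronoiCell η a) hbdd, convex_voronoiCell η a⟩

/-- If `η ⊆ ℝ^d` is locally finite with `conv(η) = ℝ^d`, then every Voronoi cell
`V_η(a)` is compact and convex. -/
theorem stmt_3 {d : ℕ} (η : Set (EuclideanSpace ℝ (Fin d)))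
    (hloc : ∀ B : Set (EuclideanSpace ℝ (Fin d)), Bornology.IsBounded B → (η ∩ B).Finite)
    (hconv : convexHull ℝ η = Set.univ) (a : EuclideanSpace ℝ (Fin d)) (ha : a ∈ η) :
    IsCompact {v : EuclideanSpace ℝ (Fin d) | ∀ b ∈ η, dist v a ≤ dist v b} ∧
      Convex ℝ {v : EuclideanSpace ℝ (Fin d) | ∀ b ∈ η, dist v a ≤ dist v b} :=
  stmt_3_general η hconv a
end

section
/- Let η ⊆ ℝ^d be locally finite. If X₁ and X₂ are two affinely independent (d+1)-point subsets of η such that for each i the open circumball of X_i contains no point of η, then the interiors of conv(X₁) and conv(X₂) are disjoint unless X₁ = X₂, in d = 2 assuming points of η in general position (no four points on a common circle). -/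
/-!
If the two circumcircles have the same centre, then each empty open disc forces the other
radius to be no larger, so both triangles are inscribed in one circle; general position
leaves only three points of `η` there, hence `X₁ = X₂`. Otherwise the radical line of the
two circles separates them: a vertex of `X₁` has power `0` with respect to its own circle
and power `≥ 0` with respect to the other one, and symmetrically for `X₂`.
-/

open Metric Set
open scoped RealInnerProductSpace

theorem disjoint_interior_of_subset_preimage_Iic_of_subset_preimage_Ici {M : Type*}
    [AddCommGroup M] [TopologicalSpace M] [IsTopologicalAddGroup M] [Module ℝ M]
    [ContinuousSMul ℝ M] {f : StrongDual ℝ M} (hf : f ≠ 0) {s t : Set M} {b : ℝ}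
    (hs : s ⊆ f ⁻¹' Iic b) (ht : t ⊆ f ⁻¹' Ici b) :
    Disjoint (interior s) (interior t) := by
  have interior_preimage (u : Set ℝ) : interior (f ⁻¹' u) = f ⁻¹' interior u :=
    ((f.isOpenMap_of_ne_zero hf).preimage_interior_eq_interior_preimage f.continuous u).symm
  have hs' : interior s ⊆ f ⁻¹' Iio b := by
    simpa only [interior_preimage, interior_Iic] using interior_mono hs
  have ht' : interior t ⊆ f ⁻¹' Ioi b := by
    simpa only [interior_preimage, interior_Ici] using interior_mono ht
  exact ((Iio_disjoint_Ioi_same (a := b)).preimage f).mono hs' ht'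

section RadicalHyperplane

variable {E : Type*} [NormedAddCommGroup E] [InnerProductSpace ℝ E]

theorem two_mul_inner_sub_eq_dist_sq_sub_dist_sq (x c₁ c₂ : E) :
    2 * ⟪c₂ - c₁, x⟫ = dist x c₁ ^ 2 - dist x c₂ ^ 2 + ‖c₂‖ ^ 2 - ‖c₁‖ ^ 2 := by
  rw [dist_eq_norm, dist_eq_norm, norm_sub_sq_real, norm_sub_sq_real, inner_sub_left,
    real_inner_comm c₁, real_inner_comm c₂]
  ring

theorem two_mul_inner_sub_le_of_mem_sphere_of_notMem_ball {x c₁ c₂ : E} {r₁ r₂ : ℝ}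
    (hr₂ : 0 ≤ r₂) (hx₁ : x ∈ sphere c₁ r₁) (hx₂ : x ∉ ball c₂ r₂) :
    2 * ⟪c₂ - c₁, x⟫ ≤ ‖c₂‖ ^ 2 - ‖c₁‖ ^ 2 + r₁ ^ 2 - r₂ ^ 2 := by
  rw [mem_sphere] at hx₁
  rw [mem_ball, not_lt] at hx₂
  have := pow_le_pow_left₀ hr₂ hx₂ 2
  rw [two_mul_inner_sub_eq_dist_sq_sub_dist_sq, hx₁]
  linarith

theorem disjoint_interior_convexHull_of_subset_sphere_of_disjoint_ball
    {c₁ c₂ : E} {r₁ r₂ : ℝ} {s t : Set E} (hc : c₁ ≠ c₂) (hr₁ : 0 ≤ r₁) (hr₂ : 0 ≤ r₂)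
    (hs : s ⊆ sphere c₁ r₁) (ht : t ⊆ sphere c₂ r₂)
    (hsb : Disjoint s (ball c₂ r₂)) (htb : Disjoint t (ball c₁ r₁)) :
    Disjoint (interior (convexHull ℝ s)) (interior (convexHull ℝ t)) := by
  set f : StrongDual ℝ E := innerSL ℝ (c₂ - c₁)
  set b : ℝ := (‖c₂‖ ^ 2 - ‖c₁‖ ^ 2 + r₁ ^ 2 - r₂ ^ 2) / 2
  have hf : f ≠ 0 := fun h ↦
    hc (sub_eq_zero.1 (innerSL_inj.1 (h.trans (map_zero (innerSL ℝ)).symm))).symm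
  refine disjoint_interior_of_subset_preimage_Iic_of_subset_preimage_Ici hf (b := b)
    (convexHull_min ?_ (convex_halfSpace_le f.isLinear b))
    (convexHull_min ?_ (convex_halfSpace_ge f.isLinear b))
  · intro x hx
    have := two_mul_inner_sub_le_of_mem_sphere_of_notMem_ball hr₂ (hs hx)
      (disjoint_left.1 hsb hx)
    simp only [mem_preimage, mem_Iic, f, b, innerSL_apply_apply]
    linarith
  · intro x hx
    have := two_mul_inner_sub_le_of_mem_sphere_of_notMem_ball hr₁ (ht hx)
      (disjoint_left.1 htb hx)
    rw [← neg_sub, inner_neg_left] at this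
    simp only [mem_preimage, mem_Ici, f, b, innerSL_apply_apply]
    linarith

end RadicalHyperplane

theorem Finset.eq_of_coe_subset_of_ncard_le {α : Type*} {s : Set α} (hs : s.Finite)
    {X Y : Finset α} (hX : (X : Set α) ⊆ s) (hY : (Y : Set α) ⊆ s)
    (hXs : s.ncard ≤ X.card) (hYs : s.ncard ≤ Y.card) : X = Y := by
  have hX' := eq_of_subset_of_ncard_le hX (by rwa [ncard_coe_finset]) hs
  have hY' := eq_of_subset_of_ncard_le hY (by rwa [ncard_coe_finset]) hs
  exact Finset.coe_injective (hX'.trans hY'.symm)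

theorem stmt_6_general (η : Set (EuclideanSpace ℝ (Fin 2)))
    (hloc : ∀ B : Set (EuclideanSpace ℝ (Fin 2)), Bornology.IsBounded B → (η ∩ B).Finite)
    (hgen : ∀ (c : EuclideanSpace ℝ (Fin 2)) (r : ℝ),
      (η ∩ Metric.sphere c r).ncard ≤ 3)
    (X₁ X₂ : Finset (EuclideanSpace ℝ (Fin 2)))
    (hX₁η : (X₁ : Set (EuclideanSpace ℝ (Fin 2))) ⊆ η)
    (hX₂η : (X₂ : Set (EuclideanSpace ℝ (Fin 2))) ⊆ η)
    (hcard₁ : X₁.card = 3) (hcard₂ : X₂.card = 3)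
    (c₁ c₂ : EuclideanSpace ℝ (Fin 2)) (r₁ r₂ : ℝ)
    (hs₁ : ∀ p ∈ X₁, dist p c₁ = r₁) (hs₂ : ∀ p ∈ X₂, dist p c₂ = r₂)
    (hb₁ : η ∩ Metric.ball c₁ r₁ = ∅) (hb₂ : η ∩ Metric.ball c₂ r₂ = ∅)
    (hne : X₁ ≠ X₂) :
    Disjoint (interior (convexHull ℝ (X₁ : Set (EuclideanSpace ℝ (Fin 2)))))
      (interior (convexHull ℝ (X₂ : Set (EuclideanSpace ℝ (Fin 2))))) := by
  obtain ⟨p₁, hp₁⟩ := Finset.card_pos.1 (hcard₁ ▸ three_pos)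
  obtain ⟨p₂, hp₂⟩ := Finset.card_pos.1 (hcard₂ ▸ three_pos)
  have hX₁b : Disjoint (X₁ : Set _) (ball c₂ r₂) :=
    (disjoint_iff_inter_eq_empty.2 hb₂).mono_left hX₁η
  have hX₂b : Disjoint (X₂ : Set _) (ball c₁ r₁) :=
    (disjoint_iff_inter_eq_empty.2 hb₁).mono_left hX₂η
  by_cases hc : c₁ = c₂
  · subst hc
    have hr₂₁ : r₂ ≤ r₁ := hs₁ p₁ hp₁ ▸ not_lt.1 (disjoint_left.1 hX₁b hp₁)
    have hr₁₂ : r₁ ≤ r₂ := hs₂ p₂ hp₂ ▸ not_lt.1 (disjoint_left.1 hX₂b hp₂)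
    obtain rfl := le_antisymm hr₁₂ hr₂₁
    exact absurd (Finset.eq_of_coe_subset_of_ncard_le (hloc _ isBounded_sphere)
      (fun p hp ↦ ⟨hX₁η hp, hs₁ p hp⟩) (fun p hp ↦ ⟨hX₂η hp, hs₂ p hp⟩)
      (hcard₁ ▸ hgen c₁ r₁) (hcard₂ ▸ hgen c₁ r₁)) hne
  · exact disjoint_interior_convexHull_of_subset_sphere_of_disjoint_ball hc
      (hs₁ p₁ hp₁ ▸ dist_nonneg) (hs₂ p₂ hp₂ ▸ dist_nonneg)
      hs₁ hs₂ hX₁b hX₂b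

/-- In the plane, for a locally finite set `η` in general position (no four points
concyclic), two distinct Delone triangles (affinely independent triples of `η`
whose open circumball contains no point of `η`) have disjoint interiors. -/
theorem stmt_6 (η : Set (EuclideanSpace ℝ (Fin 2)))
    (hloc : ∀ B : Set (EuclideanSpace ℝ (Fin 2)), Bornology.IsBounded B → (η ∩ B).Finite)
    (hgen : ∀ (c : EuclideanSpace ℝ (Fin 2)) (r : ℝ),
      (η ∩ Metric.sphere c r).ncard ≤ 3)
    (X₁ X₂ : Finset (EuclideanSpace ℝ (Fin 2)))
    (hX₁η : (X₁ : Set (EuclideanSpace ℝ (Fin 2))) ⊆ η)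
    (hX₂η : (X₂ : Set (EuclideanSpace ℝ (Fin 2))) ⊆ η)
    (hcard₁ : X₁.card = 3) (hcard₂ : X₂.card = 3)
    (hind₁ : AffineIndependent ℝ (fun x : X₁ => (x : EuclideanSpace ℝ (Fin 2))))
    (hind₂ : AffineIndependent ℝ (fun x : X₂ => (x : EuclideanSpace ℝ (Fin 2))))
    (c₁ c₂ : EuclideanSpace ℝ (Fin 2)) (r₁ r₂ : ℝ)
    (hs₁ : ∀ p ∈ X₁, dist p c₁ = r₁) (hs₂ : ∀ p ∈ X₂, dist p c₂ = r₂)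
    (hb₁ : η ∩ Metric.ball c₁ r₁ = ∅) (hb₂ : η ∩ Metric.ball c₂ r₂ = ∅)
    (hne : X₁ ≠ X₂) :
    Disjoint (interior (convexHull ℝ (X₁ : Set (EuclideanSpace ℝ (Fin 2)))))
      (interior (convexHull ℝ (X₂ : Set (EuclideanSpace ℝ (Fin 2))))) :=
  stmt_6_general η hloc hgen X₁ X₂ hX₁η hX₂η hcard₁ hcard₂ c₁ c₂ r₁ r₂ hs₁ hs₂ hb₁ hb₂ hne
end

section
/- Let Λ = {(u + v√2, u − v√2) : u, v ∈ ℤ}, π(x, y) = x, and W = {(x, y) ∈ ℝ² : |y| ≤ 1/√2}. Then the projection π(Λ ∩ W) = {u + v√2 : u, v ∈ ℤ, |u − v√2| ≤ 1/√2} is a uniformly discrete subset of ℝ: there is r > 0 such that any two distinct points of π(Λ ∩ W) are at distance at least r. -/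
/-! The difference of two points `u + v√2` of the set is `a + b√2` with `a, b ∈ ℤ`, and its
Galois conjugate `a - b√2` is the difference of the two window coordinates, hence at most `√2`
in absolute value. Since `√2` is irrational, a nonzero `a + b√2` has nonzero conjugate, so the
norm `(a + b√2)(a - b√2) = a² - 2b²` is a nonzero integer. Thus `|a + b√2| ≥ 1/√2`. -/

open Real

lemma intCast_add_intCast_mul_sqrt_two_ne_zero {a b : ℤ} (h : (a, b) ≠ (0, 0)) :
    (a : ℝ) + b * √2 ≠ 0 := by
  by_cases hb : b = 0
  · subst hb
    have ha : a ≠ 0 := by simpa using h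
    simpa using ha
  · exact ((irrational_sqrt_two.intCast_mul hb).intCast_add a).ne_zero

lemma one_le_abs_add_mul_abs_sub_sqrt_two {a b : ℤ} (h : (a : ℝ) + b * √2 ≠ 0) :
    1 ≤ |(a : ℝ) + b * √2| * |(a : ℝ) - b * √2| := by
  have hab : (a, b) ≠ (0, 0) := by rintro ⟨⟩; simp at h
  have hconj : (a : ℝ) - b * √2 ≠ 0 := by
    simpa [sub_eq_add_neg] using intCast_add_intCast_mul_sqrt_two_ne_zero (a := a) (b := -b)
      (by simpa using hab)
  have hnorm : ((a : ℝ) + b * √2) * (a - b * √2) = ((a ^ 2 - 2 * b ^ 2 : ℤ) : ℝ) := by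
    push_cast
    ring_nf
    rw [sq_sqrt zero_le_two]
  rw [← abs_mul, hnorm, ← Int.cast_abs]
  have hne : a ^ 2 - 2 * b ^ 2 ≠ 0 := by
    intro h0
    rw [h0, Int.cast_zero] at hnorm
    exact mul_ne_zero h hconj hnorm
  exact_mod_cast Int.one_le_abs hne

lemma one_div_two_mul_le_abs_sub_of_abs_conj_le {ρ : ℝ} (hρ : 0 < ρ) {u v u' v' : ℤ}
    (hx : |(u : ℝ) - v * √2| ≤ ρ) (hy : |(u' : ℝ) - v' * √2| ≤ ρ)
    (hne : (u : ℝ) + v * √2 ≠ u' + v' * √2) :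
    1 / (2 * ρ) ≤ |((u : ℝ) + v * √2) - (u' + v' * √2)| := by
  have hdiff : ((u : ℝ) + v * √2) - (u' + v' * √2) = ((u - u' : ℤ) : ℝ) + (v - v' : ℤ) * √2 := by
    push_cast; ring
  have hconj : ((u - u' : ℤ) : ℝ) - (v - v' : ℤ) * √2
      = ((u : ℝ) - v * √2) - ((u' : ℝ) - v' * √2) := by
    push_cast; ring
  have hconj_le : |((u - u' : ℤ) : ℝ) - (v - v' : ℤ) * √2| ≤ 2 * ρ := by
    rw [hconj]
    linarith [abs_sub ((u : ℝ) - v * √2) ((u' : ℝ) - v' * √2)]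
  have hdiff_ne := sub_ne_zero.mpr hne
  rw [hdiff] at hdiff_ne ⊢
  rw [div_le_iff₀ (by positivity)]
  calc 1 ≤ |((u - u' : ℤ) : ℝ) + (v - v' : ℤ) * √2| * |((u - u' : ℤ) : ℝ) - (v - v' : ℤ) * √2| :=
        one_le_abs_add_mul_abs_sub_sqrt_two hdiff_ne
    _ ≤ _ := mul_le_mul_of_nonneg_left hconj_le (abs_nonneg _)

/-- The silver mean point set `S = {u + v√2 : u, v ∈ ℤ, |u − v√2| ≤ 1/√2}`
is uniformly discrete. -/
theorem stmt_11 :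
    ∃ r > (0 : ℝ), ∀ x ∈ {x : ℝ | ∃ u v : ℤ, x = u + v * Real.sqrt 2 ∧
        |(u : ℝ) - v * Real.sqrt 2| ≤ 1 / Real.sqrt 2},
      ∀ y ∈ {x : ℝ | ∃ u v : ℤ, x = u + v * Real.sqrt 2 ∧
        |(u : ℝ) - v * Real.sqrt 2| ≤ 1 / Real.sqrt 2},
      x ≠ y → r ≤ |x - y| := by
  refine ⟨1 / (2 * (1 / √2)), by positivity, ?_⟩
  rintro x ⟨u, v, rfl, hx⟩ y ⟨u', v', rfl, hy⟩ hne
  exact one_div_two_mul_le_abs_sub_of_abs_conj_le (by positivity) hx hy hne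
end

section
/- The set S = {u + v√2 : u, v ∈ ℤ, |u − v√2| ≤ 1/√2} is relatively dense in ℝ: there exists R > 0 such that every interval of length R contains a point of S. -/
/-!
For every `v : ℤ`, the integer `u = round (v√2)` satisfies `|u - v√2| ≤ 1/2 ≤ 1/√2`, so
`u + v√2 ∈ S`, and this point lies within `1/2` of `2v√2`. The multiples of `2√2` leave no gap
longer than `2√2`, hence every interval of length `1 + 2√2` contains a point of `S`.
-/

open Real Set

def silverMeanSet : Set ℝ :=
  {x | ∃ u v : ℤ, x = u + v * √2 ∧ |(u : ℝ) - v * √2| ≤ 1 / √2}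

theorem exists_int_mul_mem_Icc {α : Type*} [Field α] [LinearOrder α] [IsStrictOrderedRing α]
    [FloorRing α] {c : α} (hc : 0 < c) (t : α) : ∃ v : ℤ, v * c ∈ Icc t (t + c) := by
  refine ⟨⌈t / c⌉, ?_, ?_⟩
  · exact (div_le_iff₀ hc).mp (Int.le_ceil _)
  · have h := (lt_div_iff₀ hc).mp (sub_lt_iff_lt_add.mpr (Int.ceil_lt_add_one (t / c)))
    linarith

theorem exists_mem_silverMeanSet_near (v : ℤ) :
    ∃ s ∈ silverMeanSet, |s - 2 * (v * √2)| ≤ 1 / 2 := by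
  set x := (v : ℝ) * √2
  have hround : |(round x : ℝ) - x| ≤ 1 / 2 := abs_sub_comm x (round x) ▸ abs_sub_round x
  have half_le : (1 : ℝ) / 2 ≤ 1 / √2 :=
    one_div_le_one_div_of_le (by positivity) ((sqrt_le_left zero_le_two).mpr (by norm_num))
  refine ⟨round x + x, ⟨round x, v, rfl, hround.trans half_le⟩, ?_⟩
  rwa [show (round x : ℝ) + x - 2 * x = round x - x by ring]

/-- The silver mean point set `S = {u + v√2 : u, v ∈ ℤ, |u − v√2| ≤ 1/√2}`
is relatively dense in `ℝ`. -/
theorem stmt_12 :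
    ∃ R > (0 : ℝ), ∀ t : ℝ, ∃ s ∈ {x : ℝ | ∃ u v : ℤ, x = u + v * Real.sqrt 2 ∧
      |(u : ℝ) - v * Real.sqrt 2| ≤ 1 / Real.sqrt 2}, s ∈ Set.Icc t (t + R) := by
  refine ⟨1 + 2 * √2, by positivity, fun t => ?_⟩
  obtain ⟨v, hv_lo, hv_hi⟩ := exists_int_mul_mem_Icc (c := 2 * √2) (by positivity) (t + 1 / 2)
  obtain ⟨s, hs, hs_near⟩ := exists_mem_silverMeanSet_near v
  refine ⟨s, hs, ?_, ?_⟩ <;> linarith [abs_le.mp hs_near]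
end
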